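/- Let 0 < p < 2 and define q by 1/p = 1/2 + 1/q. Let b be a positive operator (or positive semidefinite matrix) with ‖b‖_q ≤ 1, and y with ‖y‖_2 ≤ 1. Fix β > 1 and for k ∈ ℤ let e_k = χ_{[β^k, β^{k+1})}(b) be the spectral projection of b onto [β^k, β^{k+1}). Set λ_k = ‖y b e_k‖_2 · τ(e_k)^{1/q}. Then (∑_{k∈ℤ} |λ_k|^p)^{1/p} ≤ β. -/

import Mathlib

open scoped ComplexOrder Matrix

/-- The normalized trace `τ` on `n × n` complex matrices. -/
noncomputable def ntr {n : ℕ} (A : Matrix (Fin n) (Fin n) ℂ) : ℝ := A.trace.re / n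

/-- The `L₂`-norm associated with the normalized trace: `‖x‖₂ = τ(x*x)^(1/2)`. -/
noncomputable def nL2 {n : ℕ} (x : Matrix (Fin n) (Fin n) ℂ) : ℝ :=
  Real.sqrt (ntr (xᴴ * x))

/-- The `L_q`-norm of a positive semidefinite matrix w.r.t. the normalized trace:
`‖b‖_q = τ(b^q)^(1/q)`, with `b^q` defined via the functional calculus. -/
noncomputable def nLqPos {n : ℕ} (q : ℝ) {b : Matrix (Fin n) (Fin n) ℂ}
    (hb : b.PosSemidef) : ℝ :=
  (ntr (hb.1.cfc fun t => t ^ q)) ^ (1 / q)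

/-- The spectral projection of a positive matrix `b` onto the interval `[β^k, β^(k+1))`. -/
noncomputable def specProj {n : ℕ} {b : Matrix (Fin n) (Fin n) ℂ} (hb : b.PosSemidef)
    (β : ℝ) (k : ℤ) : Matrix (Fin n) (Fin n) ℂ :=
  hb.1.cfc fun t => if β ^ k ≤ t ∧ t < β ^ (k + 1) then 1 else 0

/-!
On the band `β^k ≤ b < β^(k+1)` the operator `b` is comparable to `β^k`, so
`‖y b e_k‖₂ ≤ β^(k+1) ‖y e_k‖₂` and `τ(e_k)^(1/q) ≤ β^(-k) ‖b e_k‖_q`; hence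
`λ_k ≤ β ‖y e_k‖₂ ‖b e_k‖_q`. Since `p/2 + p/q = 1`, Hölder's inequality gives
`∑ λ_k^p ≤ β^p (∑ ‖y e_k‖₂²)^(p/2) (∑ ‖b e_k‖_q^q)^(p/q)`, and because the `e_k` are
pairwise orthogonal the two sums are at most `‖y‖₂² ≤ 1` and `‖b‖_q^q ≤ 1`.
Diagonalising `b = U diag(μ) U*`, everything becomes a statement about the eigenvalues `μᵢ`
with weights `wᵢ = ‖y vᵢ‖²` for the eigenvectors `vᵢ`.
-/

/-- `specProj hb β k` is `hb.1.cfc (bandIndicator β k)` by definition. -/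
noncomputable def bandIndicator (β : ℝ) (k : ℤ) (t : ℝ) : ℝ :=
  if β ^ k ≤ t ∧ t < β ^ (k + 1) then 1 else 0

section Bands

variable {β : ℝ} {k : ℤ} {t : ℝ}

lemma bandIndicator_nonneg : 0 ≤ bandIndicator β k t := by
  unfold bandIndicator; split_ifs <;> norm_num

lemma eq_of_mem_band_of_mem_band (hβ : 1 < β) {l : ℤ}
    (hk : β ^ k ≤ t ∧ t < β ^ (k + 1)) (hl : β ^ l ≤ t ∧ t < β ^ (l + 1)) : k = l := by
  have h₁ : k < l + 1 := (zpow_lt_zpow_iff_right₀ hβ).mp (hk.1.trans_lt hl.2)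
  have h₂ : l < k + 1 := (zpow_lt_zpow_iff_right₀ hβ).mp (hl.1.trans_lt hk.2)
  omega

lemma sum_bandIndicator_le_one (hβ : 1 < β) (K : Finset ℤ) (t : ℝ) :
    ∑ k ∈ K, bandIndicator β k t ≤ 1 := by
  classical
  simp only [bandIndicator, Finset.sum_boole]
  exact_mod_cast Finset.card_le_one.mpr fun k hk l hl =>
    eq_of_mem_band_of_mem_band hβ (Finset.mem_filter.mp hk).2 (Finset.mem_filter.mp hl).2

lemma sq_mul_bandIndicator_le (ht : 0 ≤ t) :
    (t * bandIndicator β k t) ^ 2 ≤ (β ^ (k + 1)) ^ 2 * bandIndicator β k t := by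
  unfold bandIndicator
  split_ifs with h
  · simpa using pow_le_pow_left₀ ht h.2.le 2
  · simp

lemma zpow_rpow_mul_bandIndicator_le (hβ : 0 < β) {q : ℝ} (hq : 0 ≤ q) :
    (β ^ k) ^ q * bandIndicator β k t ≤ t ^ q * bandIndicator β k t := by
  unfold bandIndicator
  split_ifs with h
  · simpa using Real.rpow_le_rpow (zpow_pos hβ k).le h.1 hq
  · simp

end Bands

theorem Real.sum_rpow_mul_rpow_le {ι : Type*} (s : Finset ι) {f g : ι → ℝ}
    (hf : ∀ i ∈ s, 0 ≤ f i) (hg : ∀ i ∈ s, 0 ≤ g i) {a b : ℝ} (ha : 0 < a) (hb : 0 < b)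
    (hab : a + b = 1) :
    ∑ i ∈ s, f i ^ a * g i ^ b ≤ (∑ i ∈ s, f i) ^ a * (∑ i ∈ s, g i) ^ b := by
  have hconj : Real.HolderConjugate a⁻¹ b⁻¹ :=
    ⟨by simpa using hab, inv_pos.mpr ha, inv_pos.mpr hb⟩
  have hH := Real.inner_le_Lp_mul_Lq_of_nonneg s hconj (f := fun i => f i ^ a)
    (g := fun i => g i ^ b) (fun i hi => Real.rpow_nonneg (hf i hi) a)
    (fun i hi => Real.rpow_nonneg (hg i hi) b)
  rwa [Finset.sum_congr rfl fun i hi => Real.rpow_rpow_inv (hf i hi) ha.ne',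
    Finset.sum_congr rfl fun i hi => Real.rpow_rpow_inv (hg i hi) hb.ne', one_div, inv_inv,
    one_div, inv_inv] at hH

section BandSums

variable {ι : Type*} [Fintype ι] {β p q N : ℝ} {w μ : ι → ℝ}

lemma sqrt_mul_rpow_band_le (hβ : 0 < β) (hq : 0 < q) (hN : 0 ≤ N) (hw : 0 ≤ w) (hμ : 0 ≤ μ)
    (k : ℤ) :
    |√((∑ i, w i * (μ i * bandIndicator β k (μ i)) ^ 2) / N) *
        ((∑ i, bandIndicator β k (μ i)) / N) ^ (1 / q)| ≤
      β * (√((∑ i, w i * bandIndicator β k (μ i)) / N) *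
        ((∑ i, μ i ^ q * bandIndicator β k (μ i)) / N) ^ (1 / q)) := by
  set A := (∑ i, w i * bandIndicator β k (μ i)) / N
  set C := (∑ i, μ i ^ q * bandIndicator β k (μ i)) / N
  set M := (∑ i, bandIndicator β k (μ i)) / N
  have hM : 0 ≤ M := div_nonneg (Finset.sum_nonneg fun i _ => bandIndicator_nonneg) hN
  have hupper : √((∑ i, w i * (μ i * bandIndicator β k (μ i)) ^ 2) / N) ≤ β ^ (k + 1) * √A := by
    rw [← Real.sqrt_sq (zpow_pos hβ (k + 1)).le, ← Real.sqrt_mul (sq_nonneg _), mul_div_assoc',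
      Finset.mul_sum]
    refine Real.sqrt_le_sqrt (div_le_div_of_nonneg_right (Finset.sum_le_sum fun i _ => ?_) hN)
    rw [mul_left_comm]
    exact mul_le_mul_of_nonneg_left (sq_mul_bandIndicator_le (hμ i)) (hw i)
  have hlower : β ^ k * M ^ (1 / q) ≤ C ^ (1 / q) := by
    have h : (β ^ k) ^ q * M ≤ C := by
      rw [mul_div_assoc', Finset.mul_sum]
      refine div_le_div_of_nonneg_right (Finset.sum_le_sum fun i _ => ?_) hN
      exact zpow_rpow_mul_bandIndicator_le hβ hq.le
    calc β ^ k * M ^ (1 / q) = ((β ^ k) ^ q * M) ^ (1 / q) := by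
          rw [Real.mul_rpow (by positivity) hM, one_div,
            Real.rpow_rpow_inv (zpow_pos hβ k).le hq.ne']
      _ ≤ C ^ (1 / q) := by gcongr
  rw [abs_of_nonneg (mul_nonneg (Real.sqrt_nonneg _) (Real.rpow_nonneg hM _))]
  calc √((∑ i, w i * (μ i * bandIndicator β k (μ i)) ^ 2) / N) * M ^ (1 / q)
      ≤ β ^ (k + 1) * √A * M ^ (1 / q) := by gcongr
    _ = β * √A * (β ^ k * M ^ (1 / q)) := by rw [zpow_add_one₀ hβ.ne']; ring
    _ ≤ β * √A * C ^ (1 / q) := by gcongr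
    _ = β * (√A * C ^ (1 / q)) := mul_assoc _ _ _

lemma sum_sum_mul_bandIndicator_div_le (hβ : 1 < β) (hN : 0 ≤ N) (K : Finset ℤ) {v : ι → ℝ}
    (hv : 0 ≤ v) : ∑ k ∈ K, (∑ i, v i * bandIndicator β k (μ i)) / N ≤ (∑ i, v i) / N := by
  rw [← Finset.sum_div, Finset.sum_comm]
  refine div_le_div_of_nonneg_right (Finset.sum_le_sum fun i _ => ?_) hN
  rw [← Finset.mul_sum]
  exact mul_le_of_le_one_right (hv i) (sum_bandIndicator_le_one hβ K (μ i))

theorem tsum_band_rpow_le (hβ : 1 < β) (hp : 0 < p) (hq : 0 < q)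
    (hpq : 1 / p = 1 / 2 + 1 / q) (hN : 0 ≤ N) (hw : 0 ≤ w) (hμ : 0 ≤ μ)
    (hwN : (∑ i, w i) / N ≤ 1) (hμN : (∑ i, μ i ^ q) / N ≤ 1) :
    ∑' k : ℤ, |√((∑ i, w i * (μ i * bandIndicator β k (μ i)) ^ 2) / N) *
        ((∑ i, bandIndicator β k (μ i)) / N) ^ (1 / q)| ^ p ≤ β ^ p := by
  have hβ0 : 0 < β := zero_lt_one.trans hβ
  set A : ℤ → ℝ := fun k => (∑ i, w i * bandIndicator β k (μ i)) / N
  set C : ℤ → ℝ := fun k => (∑ i, μ i ^ q * bandIndicator β k (μ i)) / N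
  have hA : ∀ k, 0 ≤ A k := fun k =>
    div_nonneg (Finset.sum_nonneg fun i _ => mul_nonneg (hw i) bandIndicator_nonneg) hN
  have hC : ∀ k, 0 ≤ C k := fun k => div_nonneg (Finset.sum_nonneg fun i _ =>
    mul_nonneg (Real.rpow_nonneg (hμ i) q) bandIndicator_nonneg) hN
  have hband : ∀ k, |√((∑ i, w i * (μ i * bandIndicator β k (μ i)) ^ 2) / N) *
      ((∑ i, bandIndicator β k (μ i)) / N) ^ (1 / q)| ^ p ≤
        β ^ p * (A k ^ (p / 2) * C k ^ (p / q)) := by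
    intro k
    have h := sqrt_mul_rpow_band_le hβ0 hq hN hw hμ k
    have hC' := Real.rpow_nonneg (hC k) (1 / q)
    calc _ ≤ (β * (√(A k) * C k ^ (1 / q))) ^ p := Real.rpow_le_rpow (abs_nonneg _) h hp.le
      _ = β ^ p * (A k ^ (p / 2) * C k ^ (p / q)) := by
        rw [Real.mul_rpow hβ0.le (by positivity),
          Real.mul_rpow (Real.sqrt_nonneg _) hC', Real.sqrt_eq_rpow,
          ← Real.rpow_mul (hA k), ← Real.rpow_mul (hC k), one_div_mul_eq_div, one_div_mul_eq_div]
  have hexp : p / 2 + p / q = 1 := by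
    rw [div_eq_mul_one_div p 2, div_eq_mul_one_div p q, ← mul_add, ← hpq, mul_one_div_cancel hp.ne']
  refine Real.tsum_le_of_sum_le (fun k => by positivity) fun K => ?_
  calc _ ≤ ∑ k ∈ K, β ^ p * (A k ^ (p / 2) * C k ^ (p / q)) :=
        Finset.sum_le_sum fun k _ => hband k
    _ = β ^ p * ∑ k ∈ K, A k ^ (p / 2) * C k ^ (p / q) := (Finset.mul_sum _ _ _).symm
    _ ≤ β ^ p * ((∑ k ∈ K, A k) ^ (p / 2) * (∑ k ∈ K, C k) ^ (p / q)) := by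
      gcongr
      exact Real.sum_rpow_mul_rpow_le K (fun k _ => hA k) (fun k _ => hC k) (by positivity)
        (by positivity) hexp
    _ ≤ β ^ p := by
      refine mul_le_of_le_one_right (Real.rpow_nonneg hβ0.le p) (mul_le_one₀ ?_
        (Real.rpow_nonneg (Finset.sum_nonneg fun k _ => hC k) _) ?_)
      · exact Real.rpow_le_one (Finset.sum_nonneg fun k _ => hA k)
          ((sum_sum_mul_bandIndicator_div_le hβ hN K hw).trans hwN) (by positivity)
      · exact Real.rpow_le_one (Finset.sum_nonneg fun k _ => hC k)
          ((sum_sum_mul_bandIndicator_div_le hβ hN K fun i => Real.rpow_nonneg (hμ i) q).trans hμN)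
          (by positivity)

end BandSums

namespace Matrix

variable {m 𝕜 : Type*} [Fintype m] [RCLike 𝕜]

lemma re_trace_conjTranspose_mul_self (M : Matrix m m 𝕜) :
    RCLike.re (Mᴴ * M).trace = ∑ i, ∑ j, ‖M j i‖ ^ 2 := by
  simp only [trace, diag_apply, mul_apply, conjTranspose_apply, RCLike.star_def,
    RCLike.conj_mul, map_sum]
  norm_cast

namespace IsHermitian

variable [DecidableEq m] {A : Matrix m m 𝕜} (hA : A.IsHermitian)

/-- `‖y vᵢ‖²` for the `i`-th eigenvector `vᵢ` of `A`. -/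
noncomputable def eigenWeight (y : Matrix m m 𝕜) (i : m) : ℝ :=
  ∑ j, ‖(y * (hA.eigenvectorUnitary : Matrix m m 𝕜)) j i‖ ^ 2

lemma eigenWeight_nonneg (y : Matrix m m 𝕜) : 0 ≤ hA.eigenWeight y := fun i => by
  unfold eigenWeight; positivity

lemma cfc_eq_mul_diagonal_mul (f : ℝ → ℝ) :
    hA.cfc f = (hA.eigenvectorUnitary : Matrix m m 𝕜) *
      diagonal (fun i => (f (hA.eigenvalues i) : 𝕜)) *
        star (hA.eigenvectorUnitary : Matrix m m 𝕜) := by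
  rw [IsHermitian.cfc, Unitary.conjStarAlgAut_apply]; rfl

lemma cfc_mul_cfc (f g : ℝ → ℝ) : hA.cfc f * hA.cfc g = hA.cfc (fun t => f t * g t) := by
  simp only [IsHermitian.cfc, ← map_mul, diagonal_mul_diagonal]
  congr 2
  ext i
  simp

lemma cfc_id_eq_self : hA.cfc id = A := by
  rw [← hA.cfc_eq]; exact cfc_id ℝ A hA

lemma cfc_const_one_eq_one : hA.cfc (fun _ => 1) = 1 := by
  rw [← hA.cfc_eq]; exact cfc_const_one ℝ A

lemma re_trace_cfc (f : ℝ → ℝ) : RCLike.re (hA.cfc f).trace = ∑ i, f (hA.eigenvalues i) := by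
  rw [cfc_eq_mul_diagonal_mul, trace_mul_cycle, Unitary.coe_star_mul_self, one_mul,
    trace_diagonal, map_sum]
  simp

lemma re_trace_conjTranspose_mul_self_mul_cfc (y : Matrix m m 𝕜) (f : ℝ → ℝ) :
    RCLike.re ((y * hA.cfc f)ᴴ * (y * hA.cfc f)).trace =
      ∑ i, hA.eigenWeight y i * f (hA.eigenvalues i) ^ 2 := by
  set U := (hA.eigenvectorUnitary : Matrix m m 𝕜)
  set D := diagonal (fun i => (f (hA.eigenvalues i) : 𝕜))
  have hconj : (y * (U * D * star U))ᴴ * (y * (U * D * star U)) =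
      U * ((y * U * D)ᴴ * (y * U * D)) * star U := by
    simp only [conjTranspose_mul, star_eq_conjTranspose, conjTranspose_conjTranspose, mul_assoc]
  rw [cfc_eq_mul_diagonal_mul, hconj, trace_mul_cycle, Unitary.coe_star_mul_self, one_mul,
    re_trace_conjTranspose_mul_self]
  simp [U, D, eigenWeight, mul_diagonal, norm_mul, mul_pow, Finset.sum_mul]

end IsHermitian

end Matrix

section NormalizedTrace

variable {n : ℕ}

lemma ntr_cfc {A : Matrix (Fin n) (Fin n) ℂ} (hA : A.IsHermitian) (f : ℝ → ℝ) :
    ntr (hA.cfc f) = (∑ i, f (hA.eigenvalues i)) / n :=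
  congrArg (· / (n : ℝ)) (hA.re_trace_cfc f)

lemma nL2_mul_cfc {A : Matrix (Fin n) (Fin n) ℂ} (hA : A.IsHermitian)
    (y : Matrix (Fin n) (Fin n) ℂ) (f : ℝ → ℝ) :
    nL2 (y * hA.cfc f) = √((∑ i, hA.eigenWeight y i * f (hA.eigenvalues i) ^ 2) / n) :=
  congrArg (fun x => √(x / (n : ℝ))) (hA.re_trace_conjTranspose_mul_self_mul_cfc y f)

lemma nL2_eq_sqrt_sum_eigenWeight {A : Matrix (Fin n) (Fin n) ℂ} (hA : A.IsHermitian)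
    (y : Matrix (Fin n) (Fin n) ℂ) : nL2 y = √((∑ i, hA.eigenWeight y i) / n) := by
  simpa [hA.cfc_const_one_eq_one] using nL2_mul_cfc hA y (fun _ => 1)

lemma nLqPos_eq {q : ℝ} {b : Matrix (Fin n) (Fin n) ℂ} (hb : b.PosSemidef) :
    nLqPos q hb = ((∑ i, hb.1.eigenvalues i ^ q) / n) ^ (1 / q) :=
  congrArg (· ^ (1 / q)) (ntr_cfc hb.1 _)

lemma mul_specProj {b : Matrix (Fin n) (Fin n) ℂ} (hb : b.PosSemidef) (β : ℝ) (k : ℤ) :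
    b * specProj hb β k = hb.1.cfc (fun t => t * bandIndicator β k t) :=
  (congrArg (· * specProj hb β k) hb.1.cfc_id_eq_self).symm.trans (hb.1.cfc_mul_cfc _ _)

end NormalizedTrace

theorem crude_atom_coefficient_estimate_general {n : ℕ} {p q β : ℝ}
    (hp0 : 0 < p) (hp2 : p < 2) (hq : 1 / p = 1 / 2 + 1 / q) (hβ : 1 < β)
    {b y : Matrix (Fin n) (Fin n) ℂ} (hb : b.PosSemidef)
    (hbq : nLqPos q hb ≤ 1) (hy : nL2 y ≤ 1) :
    (∑' k : ℤ, |nL2 (y * b * specProj hb β k) * (ntr (specProj hb β k)) ^ (1 / q)| ^ p)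
        ^ (1 / p) ≤ β := by
  have hq0 : 0 < q := one_div_pos.mp (by linarith [one_div_lt_one_div_of_lt hp0 hp2])
  set μ := hb.1.eigenvalues
  set w := hb.1.eigenWeight y
  have hwN : (∑ i, w i) / n ≤ 1 := by
    rwa [nL2_eq_sqrt_sum_eigenWeight hb.1, Real.sqrt_le_one] at hy
  have hμN : (∑ i, μ i ^ q) / n ≤ 1 := by
    have hnonneg : 0 ≤ (∑ i, μ i ^ q) / n := div_nonneg (Finset.sum_nonneg fun i _ =>
      Real.rpow_nonneg (hb.eigenvalues_nonneg i) q) n.cast_nonneg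
    rwa [nLqPos_eq, one_div, Real.rpow_inv_le_iff_of_pos hnonneg zero_le_one hq0,
      Real.one_rpow] at hbq
  have hterm : ∀ k : ℤ, nL2 (y * b * specProj hb β k) * ntr (specProj hb β k) ^ (1 / q) =
      √((∑ i, w i * (μ i * bandIndicator β k (μ i)) ^ 2) / n) *
        ((∑ i, bandIndicator β k (μ i)) / n) ^ (1 / q) := fun k => by
    rw [mul_assoc, mul_specProj, nL2_mul_cfc]
    exact congrArg (_ * · ^ (1 / q)) (ntr_cfc hb.1 (bandIndicator β k))
  have hsum := tsum_band_rpow_le hβ hp0 hq0 hq n.cast_nonneg (hb.1.eigenWeight_nonneg y)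
    hb.eigenvalues_nonneg hwN hμN
  simp_rw [hterm]
  calc _ ≤ (β ^ p) ^ (1 / p) := by gcongr
    _ = β := by rw [one_div, Real.rpow_rpow_inv (zero_lt_one.trans hβ).le hp0.ne']

/-- Key estimate in the decomposition of a `(p,2)_c`-crude atom `a = yb` into
`(p,2)_c`-atoms: with `e_k = χ_{[β^k, β^(k+1))}(b)` and
`λ_k = ‖y b e_k‖₂ · τ(e_k)^(1/q)`, one has `(∑_{k∈ℤ} |λ_k|^p)^(1/p) ≤ β`. -/
theorem crude_atom_coefficient_estimate {n : ℕ} (hn : 0 < n) {p q β : ℝ}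
    (hp0 : 0 < p) (hp2 : p < 2) (hq : 1 / p = 1 / 2 + 1 / q) (hβ : 1 < β)
    {b y : Matrix (Fin n) (Fin n) ℂ} (hb : b.PosSemidef)
    (hbq : nLqPos q hb ≤ 1) (hy : nL2 y ≤ 1) :
    (∑' k : ℤ, |nL2 (y * b * specProj hb β k) * (ntr (specProj hb β k)) ^ (1 / q)| ^ p)
        ^ (1 / p) ≤ β :=
  crude_atom_coefficient_estimate_general hp0 hp2 hq hβ hb hbq hy
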